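/- arXiv:1812.07239 — 7 statements merged into one kernel-verified Lean document; each statement's English description precedes it below -/
import Mathlib

section
/- If r1 and r2 are coprime complex polynomials and 1 < p < ∞, then the intersection of the subspaces r1·H^p and r2·H^p of the Hardy space H^p of the unit disc equals r1·r2·H^p. -/
open Polynomial Metric

/-- The Hardy space `H^p` of the open unit disc: holomorphic functions on the disc with
uniformly bounded integral means of order `p` on circles of radius `r < 1`. -/
noncomputable def HardySpace (p : ℝ) : Set (ℂ → ℂ) :=
  {f | DifferentiableOn ℂ f (ball (0 : ℂ) 1) ∧
    ∃ C : ℝ, ∀ r : ℝ, 0 ≤ r → r < 1 →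
      (∫ θ in (0:ℝ)..(2 * Real.pi),
        ‖f ((r : ℂ) * Complex.exp (θ * Complex.I))‖ ^ p) ≤ C}

/-! By Bézout, `a r₁ + b r₂ = 1` for some polynomials `a, b`. If `g = r₁ f₁ = r₂ f₂` with
`f₁, f₂ ∈ H^p`, then `g = r₁ r₂ (a f₂ + b f₁)`, and `a f₂ + b f₁ ∈ H^p` because `H^p` is
closed under sums and under multiplication by functions bounded on the disc, such as
polynomials. -/

lemma Real.add_rpow_le_two_rpow_mul_add {a b p : ℝ} (ha : 0 ≤ a) (hb : 0 ≤ b) (hp : 0 ≤ p) :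
    (a + b) ^ p ≤ 2 ^ p * (a ^ p + b ^ p) := by
  have hmax : max a b ^ p ≤ a ^ p + b ^ p := by
    rcases le_total a b with h | h
    · rw [max_eq_right h]; linarith [Real.rpow_nonneg ha p]
    · rw [max_eq_left h]; linarith [Real.rpow_nonneg hb p]
  calc (a + b) ^ p ≤ (2 * max a b) ^ p :=
        Real.rpow_le_rpow (by positivity) (by linarith [le_max_left a b, le_max_right a b]) hp
    _ = 2 ^ p * max a b ^ p := Real.mul_rpow zero_le_two (le_max_of_le_left ha)
    _ ≤ 2 ^ p * (a ^ p + b ^ p) := by gcongr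

lemma ofReal_mul_exp_mem_ball_one {r : ℝ} (hr₀ : 0 ≤ r) (hr₁ : r < 1) (θ : ℝ) :
    (r : ℂ) * Complex.exp (θ * Complex.I) ∈ ball (0 : ℂ) 1 := by
  rw [← circleMap_zero, mem_ball_zero_iff, norm_circleMap_zero, abs_of_nonneg hr₀]
  exact hr₁

def HasBoundedCircleMeans (u : ℂ → ℝ) : Prop :=
  ∃ C : ℝ, ∀ r : ℝ, 0 ≤ r → r < 1 →
    (∫ θ in (0:ℝ)..(2 * Real.pi), u ((r : ℂ) * Complex.exp (θ * Complex.I))) ≤ C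

lemma mem_HardySpace_iff {p : ℝ} {f : ℂ → ℂ} :
    f ∈ HardySpace p ↔
      DifferentiableOn ℂ f (ball (0 : ℂ) 1) ∧ HasBoundedCircleMeans fun z => ‖f z‖ ^ p :=
  Iff.rfl

namespace HasBoundedCircleMeans

variable {u v : ℂ → ℝ}

lemma intervalIntegrable_of_continuousOn (hu : ContinuousOn u (ball (0 : ℂ) 1)) {r : ℝ}
    (hr₀ : 0 ≤ r) (hr₁ : r < 1) :
    IntervalIntegrable (fun θ : ℝ => u ((r : ℂ) * Complex.exp (θ * Complex.I)))
      MeasureTheory.volume 0 (2 * Real.pi) := by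
  have hcircle : Continuous fun θ : ℝ => (r : ℂ) * Complex.exp (θ * Complex.I) := by fun_prop
  exact (continuousOn_univ.mp (hu.comp hcircle.continuousOn
    fun θ _ => ofReal_mul_exp_mem_ball_one hr₀ hr₁ θ)).intervalIntegrable _ _

lemma add (hu : HasBoundedCircleMeans u) (hv : HasBoundedCircleMeans v)
    (hu' : ContinuousOn u (ball (0 : ℂ) 1)) (hv' : ContinuousOn v (ball (0 : ℂ) 1)) :
    HasBoundedCircleMeans (u + v) := by
  obtain ⟨C, hC⟩ := hu
  obtain ⟨D, hD⟩ := hv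
  refine ⟨C + D, fun r hr₀ hr₁ => ?_⟩
  rw [Pi.add_def, intervalIntegral.integral_add (intervalIntegrable_of_continuousOn hu' hr₀ hr₁)
    (intervalIntegrable_of_continuousOn hv' hr₀ hr₁)]
  exact add_le_add (hC r hr₀ hr₁) (hD r hr₀ hr₁)

lemma const_mul (hu : HasBoundedCircleMeans u) {c : ℝ} (hc : 0 ≤ c) :
    HasBoundedCircleMeans fun z => c * u z := by
  obtain ⟨C, hC⟩ := hu
  refine ⟨c * C, fun r hr₀ hr₁ => ?_⟩
  rw [intervalIntegral.integral_const_mul]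
  exact mul_le_mul_of_nonneg_left (hC r hr₀ hr₁) hc

lemma mono (hu : HasBoundedCircleMeans u) (hvu : ∀ z ∈ ball (0 : ℂ) 1, v z ≤ u z)
    (hu' : ContinuousOn u (ball (0 : ℂ) 1)) (hv' : ContinuousOn v (ball (0 : ℂ) 1)) :
    HasBoundedCircleMeans v := by
  obtain ⟨C, hC⟩ := hu
  refine ⟨C, fun r hr₀ hr₁ => le_trans ?_ (hC r hr₀ hr₁)⟩
  exact intervalIntegral.integral_mono_on (by positivity)
    (intervalIntegrable_of_continuousOn hv' hr₀ hr₁)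
    (intervalIntegrable_of_continuousOn hu' hr₀ hr₁)
    fun θ _ => hvu _ (ofReal_mul_exp_mem_ball_one hr₀ hr₁ θ)

end HasBoundedCircleMeans

namespace HardySpace

variable {p : ℝ} {f g : ℂ → ℂ}

lemma continuousOn_norm_rpow (hp : 0 ≤ p) (hf : DifferentiableOn ℂ f (ball (0 : ℂ) 1)) :
    ContinuousOn (fun z => ‖f z‖ ^ p) (ball (0 : ℂ) 1) :=
  hf.continuousOn.norm.rpow_const fun _ _ => Or.inr hp

lemma add_mem (hp : 0 ≤ p) (hf : f ∈ HardySpace p) (hg : g ∈ HardySpace p) :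
    (fun z => f z + g z) ∈ HardySpace p := by
  obtain ⟨hfd, hfC⟩ := mem_HardySpace_iff.mp hf
  obtain ⟨hgd, hgC⟩ := mem_HardySpace_iff.mp hg
  have hfg := hfd.add hgd
  refine ⟨hfg, ((hfC.add hgC (continuousOn_norm_rpow hp hfd)
    (continuousOn_norm_rpow hp hgd)).const_mul
    (Real.rpow_nonneg zero_le_two p)).mono (fun z _ => ?_) ?_ (continuousOn_norm_rpow hp hfg)⟩
  · calc ‖f z + g z‖ ^ p ≤ (‖f z‖ + ‖g z‖) ^ p :=
          Real.rpow_le_rpow (norm_nonneg _) (norm_add_le _ _) hp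
      _ ≤ 2 ^ p * (‖f z‖ ^ p + ‖g z‖ ^ p) :=
          Real.add_rpow_le_two_rpow_mul_add (norm_nonneg _) (norm_nonneg _) hp
  · exact continuousOn_const.mul
      ((continuousOn_norm_rpow hp hfd).add (continuousOn_norm_rpow hp hgd))

lemma mul_mem_of_bounded (hp : 0 ≤ p) {h : ℂ → ℂ}
    (hh : DifferentiableOn ℂ h (ball (0 : ℂ) 1)) {M : ℝ} (hM : ∀ z ∈ ball (0 : ℂ) 1, ‖h z‖ ≤ M)
    (hf : f ∈ HardySpace p) :
    (fun z => h z * f z) ∈ HardySpace p := by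
  obtain ⟨hfd, hfC⟩ := mem_HardySpace_iff.mp hf
  have hhf := hh.mul hfd
  have hM₀ : 0 ≤ M := (norm_nonneg _).trans (hM 0 (mem_ball_self one_pos))
  refine ⟨hhf, (hfC.const_mul (Real.rpow_nonneg hM₀ p)).mono (fun z hz => ?_)
    (continuousOn_const.mul (continuousOn_norm_rpow hp hfd)) (continuousOn_norm_rpow hp hhf)⟩
  rw [Pi.mul_apply, norm_mul, Real.mul_rpow (norm_nonneg _) (norm_nonneg _)]
  gcongr
  exact hM z hz

lemma poly_mul_mem (hp : 0 ≤ p) (q : ℂ[X]) (hf : f ∈ HardySpace p) :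
    (fun z => q.eval z * f z) ∈ HardySpace p := by
  obtain ⟨M, hM⟩ := (isCompact_closedBall (0 : ℂ) 1).exists_bound_of_continuousOn
    q.continuous.continuousOn
  exact mul_mem_of_bounded hp q.differentiableOn (fun z hz => hM z (ball_subset_closedBall hz)) hf

end HardySpace

/-- If `r1` and `r2` are coprime polynomials and `1 < p < ∞`, then
`r1·H^p ∩ r2·H^p = r1·r2·H^p`. -/
theorem inter_poly_mul_HardySpace (p : ℝ) (hp : 1 < p) (r1 r2 : Polynomial ℂ)
    (hcop : IsCoprime r1 r2) :
    {g : ℂ → ℂ | ∃ f ∈ HardySpace p, g = fun z => r1.eval z * f z} ∩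
      {g : ℂ → ℂ | ∃ f ∈ HardySpace p, g = fun z => r2.eval z * f z} =
    {g : ℂ → ℂ | ∃ f ∈ HardySpace p, g = fun z => (r1 * r2).eval z * f z} := by
  have hp₀ : 0 ≤ p := by linarith
  obtain ⟨a, b, hab⟩ := hcop
  ext g
  constructor
  · rintro ⟨⟨f₁, hf₁, rfl⟩, f₂, hf₂, hg⟩
    refine ⟨fun z => a.eval z * f₂ z + b.eval z * f₁ z,
      HardySpace.add_mem hp₀ (HardySpace.poly_mul_mem hp₀ a hf₂)
        (HardySpace.poly_mul_mem hp₀ b hf₁), funext fun z => ?_⟩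
    have hrf : r1.eval z * f₁ z = r2.eval z * f₂ z := congrFun hg z
    have hbezout : a.eval z * r1.eval z + b.eval z * r2.eval z = 1 := by
      simpa using congrArg (eval z) hab
    simp only [eval_mul]
    linear_combination (a.eval z * r1.eval z) * hrf - (r1.eval z * f₁ z) * hbezout
  · rintro ⟨f, hf, rfl⟩
    refine ⟨⟨fun z => r2.eval z * f z, HardySpace.poly_mul_mem hp₀ r2 hf, ?_⟩,
      fun z => r1.eval z * f z, HardySpace.poly_mul_mem hp₀ r1 hf, ?_⟩ <;>
    · funext z
      simp only [eval_mul]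
      ring
end

section
/- Let ω = s/q be a rational function with s, q coprime complex polynomials, q having all roots on the unit circle, with deg(s) = n and deg(q) = m. Suppose ω is proper (n ≤ m), s(z) = z^{m−n} s̃(z) with s̃ self-inversive (s̃ = γ s̃^♯ with the same unimodular constant γ for which q = γ q^♯), where γ = q(0)/conj(q_m) with q_m the leading coefficient of q. Then ω maps the unit circle (minus the roots of q) into the real line: for all z with |z| = 1 and q(z) ≠ 0, s(z)/q(z) ∈ ℝ. -/
/-!
On the unit circle `conj z = z⁻¹`, so a polynomial `r = γ r^♯` of degree `k` satisfies
`r(z) = γ z^k conj (r(z))` there. Because `s = z^(m-n) s̃` with `deg s̃ = 2n - m`, the value `s(z)`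
satisfies the same relation `w = γ z^m conj w` as `q(z)`, and a quotient of two solutions of
`w = c conj w` is fixed by conjugation, hence real.
-/

open Polynomial

noncomputable def sharp (r : Polynomial ℂ) : Polynomial ℂ :=
  (r.map (starRingEnd ℂ)).reverse

open ComplexConjugate

theorem Complex.exists_div_eq_ofReal_of_eq_mul_conj {a b c : ℂ} (ha : a = c * conj a)
    (hb : b = c * conj b) (ha0 : a ≠ 0) : ∃ t : ℝ, b / a = t := by
  refine Complex.conj_eq_iff_real.mp ?_
  have hca : conj a ≠ 0 := (_root_.map_ne_zero _).mpr ha0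
  rw [map_div₀, div_eq_div_iff hca ha0]
  linear_combination conj b * ha - conj a * hb

theorem Complex.pow_mul_eq_mul_conj_of_norm_eq_one {z b c : ℂ} {k : ℕ} (hz : ‖z‖ = 1)
    (hb : b = c * z ^ k * conj b) (d : ℕ) :
    z ^ d * b = c * z ^ (2 * d + k) * conj (z ^ d * b) := by
  have hz0 : z ≠ 0 := norm_ne_zero_iff.mp (by rw [hz]; exact one_ne_zero)
  rw [map_mul, map_pow, ← Complex.inv_eq_conj hz, pow_add, two_mul, pow_add, inv_pow]
  field_simp
  exact hb

theorem sharp_eval_of_norm_eq_one (r : ℂ[X]) {z : ℂ} (hz : ‖z‖ = 1) :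
    (sharp r).eval z = z ^ r.natDegree * conj (r.eval z) := by
  have hz0 : z ≠ 0 := norm_ne_zero_iff.mp (by rw [hz]; exact one_ne_zero)
  let _ := invertibleOfNonzero (inv_ne_zero hz0)
  have h := eval₂_reverse_mul_pow (RingHom.id ℂ) z⁻¹ (r.map (starRingEnd ℂ))
  rw [invOf_eq_inv, inv_inv, eval₂_id, eval₂_id, eval_map, Complex.inv_eq_conj hz,
    eval₂_at_apply, natDegree_map_eq_of_injective (RingHom.injective _)] at h
  rw [sharp, ← h, mul_left_comm, ← mul_pow, ← Complex.inv_eq_conj hz, mul_inv_cancel₀ hz0,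
    one_pow, mul_one]

theorem eval_eq_mul_conj_of_eq_C_mul_sharp {r : ℂ[X]} {γ z : ℂ} (hr : r = C γ * sharp r)
    (hz : ‖z‖ = 1) : r.eval z = γ * z ^ r.natDegree * conj (r.eval z) := by
  conv_lhs => rw [hr]
  rw [eval_mul, eval_C, sharp_eval_of_norm_eq_one r hz, mul_assoc]

theorem eval_eq_mul_conj_of_eq_X_pow_mul {s st : ℂ[X]} {γ z : ℂ} {m : ℕ} (hm : s.natDegree ≤ m)
    (hs : s = X ^ (m - s.natDegree) * st) (hst : st = C γ * sharp st) (hz : ‖z‖ = 1) :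
    s.eval z = γ * z ^ m * conj (s.eval z) := by
  by_cases hst0 : st = 0
  · subst hst0
    rw [hs]
    simp
  have hdeg : s.natDegree = (m - s.natDegree) + st.natDegree := by
    conv_lhs => rw [hs]
    rw [natDegree_mul (pow_ne_zero _ X_ne_zero) hst0, natDegree_X_pow]
  have hm' : m = 2 * (m - s.natDegree) + st.natDegree := by omega
  have key := Complex.pow_mul_eq_mul_conj_of_norm_eq_one hz
    (eval_eq_mul_conj_of_eq_C_mul_sharp hst hz) (m - s.natDegree)
  rw [← hm'] at key
  rwa [hs, eval_mul, eval_X_pow]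

theorem real_on_circle_of_selfInversive_general (s q st : Polynomial ℂ) (γ : ℂ)
    (hprop : s.natDegree ≤ q.natDegree)
    (hqsi : q = Polynomial.C γ * sharp q)
    (hs : s = Polynomial.X ^ (q.natDegree - s.natDegree) * st)
    (hstsi : st = Polynomial.C γ * sharp st) :
    ∀ z : ℂ, ‖z‖ = 1 → q.eval z ≠ 0 →
      ∃ t : ℝ, s.eval z / q.eval z = (t : ℂ) := by
  intro z hz hqz
  exact Complex.exists_div_eq_ofReal_of_eq_mul_conj (eval_eq_mul_conj_of_eq_C_mul_sharp hqsi hz)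
    (eval_eq_mul_conj_of_eq_X_pow_mul hprop hs hstsi hz) hqz

/-- If `ω = s/q` is proper, `q` has all roots on the unit circle, `s = z^(m-n) s̃` with
`s̃` self-inversive with the same unimodular constant `γ = q(0)/conj(q_m)` as `q`, then
`ω` maps the unit circle (minus the roots of `q`) into the real line. -/
theorem real_on_circle_of_selfInversive (s q st : Polynomial ℂ) (γ : ℂ)
    (hcop : IsCoprime s q) (hq : q ≠ 0)
    (hqroots : ∀ z : ℂ, q.IsRoot z → ‖z‖ = 1)
    (hprop : s.natDegree ≤ q.natDegree)
    (hγ : γ = q.coeff 0 / (starRingEnd ℂ) q.leadingCoeff)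
    (hγabs : ‖γ‖ = 1)
    (hqsi : q = Polynomial.C γ * sharp q)
    (hs : s = Polynomial.X ^ (q.natDegree - s.natDegree) * st)
    (hstsi : st = Polynomial.C γ * sharp st) :
    ∀ z : ℂ, ‖z‖ = 1 → q.eval z ≠ 0 →
      ∃ t : ℝ, s.eval z / q.eval z = (t : ℂ) :=
  real_on_circle_of_selfInversive_general s q st γ hprop hqsi hs hstsi
end

section
/- Let ω = s/q be a rational function with s, q coprime polynomials, q having all roots on the unit circle, such that ω(z) ∈ ℝ for all z on the unit circle with q(z) ≠ 0. Then deg(s) ≤ deg(q) ≤ 2·deg(s). -/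
/-!
Write `f♯ = conjReflect N f` for the coefficientwise conjugate of `f` reflected at degree
`N = max (deg s) (deg q)`. On the unit circle `conj z = z⁻¹`, so `f♯(z) = z ^ N * conj (f z)`, and
realness of `s/q` there becomes the polynomial identity `s q♯ = s♯ q`. As `q` has no root at
`0`, `deg q♯ = N`, while `deg s♯ = N - ν` with `ν` the order of vanishing of `s` at `0`. Comparing
degrees gives `deg q = deg s + ν` with `0 ≤ ν ≤ deg s`.
-/

open Polynomial ComplexConjugate

theorem Complex.setOf_norm_eq_one_infinite : {z : ℂ | ‖z‖ = 1}.Infinite := by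
  have hsphere : IsConnected (Metric.sphere (0 : ℂ) 1) :=
    isConnected_sphere (by simp [Complex.rank_real_complex]) 0 zero_le_one
  have hnontrivial : (Metric.sphere (0 : ℂ) 1).Nontrivial :=
    ⟨1, by simp, -1, by simp, by norm_num⟩
  simpa [Metric.sphere, dist_zero_right] using
    hsphere.isPreconnected.infinite_of_nontrivial hnontrivial

namespace Polynomial

theorem eval_reflect {K : Type*} [Field K] {f : K[X]} {N : ℕ} (hf : f.natDegree ≤ N) {z : K}
    (hz : z ≠ 0) : (reflect N f).eval z = z ^ N * f.eval z⁻¹ := by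
  have := invertibleOfNonzero (inv_ne_zero hz)
  have h := eval₂_reflect_mul_pow (RingHom.id K) z⁻¹ N f hf
  rw [invOf_eq_inv, inv_inv] at h
  rw [← eval₂_id, ← eval₂_id, ← h, mul_left_comm, ← mul_pow, mul_inv_cancel₀ hz, one_pow,
    mul_one]

theorem natDegree_reflect {R : Type*} [Semiring R] {f : R[X]} {N : ℕ} (hf : f.natDegree ≤ N)
    (h0 : f ≠ 0) : (reflect N f).natDegree = N - f.natTrailingDegree := by
  have h : reflect N f = reverse f * X ^ (N - f.natDegree) := by
    simpa [Nat.add_sub_cancel' hf, reverse] using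
      reflect_mul f 1 le_rfl (natDegree_one.trans_le (Nat.zero_le (N - f.natDegree)))
  have : Nontrivial R := nontrivial_iff.mp (nontrivial_of_ne f 0 h0)
  rw [h, natDegree_mul_X_pow _ (reverse_eq_zero.not.mpr h0), reverse_natDegree]
  have := f.natTrailingDegree_le_natDegree
  omega

noncomputable def conjReflect (N : ℕ) (f : ℂ[X]) : ℂ[X] :=
  (reflect N f).map (starRingEnd ℂ)

theorem eval_conjReflect_of_norm_eq_one {f : ℂ[X]} {N : ℕ} (hf : f.natDegree ≤ N) {z : ℂ}
    (hz : ‖z‖ = 1) : (conjReflect N f).eval z = z ^ N * conj (f.eval z) := by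
  have hz0 : z ≠ 0 := norm_ne_zero_iff.mp (hz ▸ one_ne_zero)
  rw [conjReflect, eval_map, ← Complex.conj_conj z, eval₂_at_apply,
    eval_reflect hf (by simpa using hz0), map_mul, map_pow, Complex.conj_conj,
    ← Complex.inv_eq_conj hz, inv_inv]

theorem natDegree_conjReflect {f : ℂ[X]} {N : ℕ} (hf : f.natDegree ≤ N) (h0 : f ≠ 0) :
    (conjReflect N f).natDegree = N - f.natTrailingDegree := by
  rw [conjReflect, natDegree_map_eq_of_injective (RingHom.injective _), natDegree_reflect hf h0]

theorem mul_conjReflect_eq_conjReflect_mul {s q : ℂ[X]} {N : ℕ} (hsN : s.natDegree ≤ N)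
    (hqN : q.natDegree ≤ N) (hq : q ≠ 0)
    (hreal : ∀ z : ℂ, ‖z‖ = 1 → q.eval z ≠ 0 →
      ∃ t : ℝ, s.eval z / q.eval z = (t : ℂ)) :
    s * conjReflect N q = conjReflect N s * q := by
  refine eq_of_infinite_eval_eq _ _
    ((Complex.setOf_norm_eq_one_infinite.sdiff (finite_setOfPred_isRoot hq)).mono ?_)
  rintro z ⟨hz : ‖z‖ = 1, hqz : ¬q.IsRoot z⟩
  obtain ⟨t, ht⟩ := hreal z hz hqz
  rw [div_eq_iff hqz] at ht
  have hcross : s.eval z * conj (q.eval z) = conj (s.eval z) * q.eval z := by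
    rw [ht, map_mul, Complex.conj_ofReal]
    ring
  change eval z (s * _) = eval z (_ * q)
  rw [eval_mul, eval_mul, eval_conjReflect_of_norm_eq_one hqN hz,
    eval_conjReflect_of_norm_eq_one hsN hz]
  linear_combination z ^ N * hcross

theorem natDegree_add_natTrailingDegree_eq_of_real_on_circle {s q : ℂ[X]} (hs : s ≠ 0)
    (hq0 : q.eval 0 ≠ 0)
    (hreal : ∀ z : ℂ, ‖z‖ = 1 → q.eval z ≠ 0 →
      ∃ t : ℝ, s.eval z / q.eval z = (t : ℂ)) :
    s.natDegree + s.natTrailingDegree = q.natDegree := by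
  have hq : q ≠ 0 := fun h => hq0 (h ▸ eval_zero)
  have hqν : q.natTrailingDegree = 0 :=
    natTrailingDegree_eq_zero.mpr (Or.inr (coeff_zero_eq_eval_zero q ▸ hq0))
  set N := max s.natDegree q.natDegree
  have hsN : s.natDegree ≤ N := le_max_left _ _
  have hqN : q.natDegree ≤ N := le_max_right _ _
  have hdeg := congrArg natDegree (mul_conjReflect_eq_conjReflect_mul hsN hqN hq hreal)
  rw [natDegree_mul hs (by simpa [conjReflect] using hq),
    natDegree_mul (by simpa [conjReflect] using hs) hq, natDegree_conjReflect hqN hq,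
    natDegree_conjReflect hsN hs, hqν] at hdeg
  have := s.natTrailingDegree_le_natDegree
  omega

end Polynomial

theorem degree_constraints_of_symmetric_general (s q : Polynomial ℂ)
    (hcop : IsCoprime s q)
    (hqroots : ∀ z : ℂ, q.IsRoot z → ‖z‖ = 1)
    (hreal : ∀ z : ℂ, ‖z‖ = 1 → q.eval z ≠ 0 →
      ∃ t : ℝ, s.eval z / q.eval z = (t : ℂ)) :
    s.natDegree ≤ q.natDegree ∧ q.natDegree ≤ 2 * s.natDegree := by
  have hq0 : q.eval 0 ≠ 0 := fun h => by simpa using hqroots 0 h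
  rcases eq_or_ne s 0 with rfl | hs
  · simp [natDegree_eq_zero_of_isUnit (isCoprime_zero_left.mp hcop)]
  · have hν := natDegree_add_natTrailingDegree_eq_of_real_on_circle hs hq0 hreal
    have := s.natTrailingDegree_le_natDegree
    omega

/-- If `ω = s/q` with `s, q` coprime, all roots of `q` on the unit circle, and `ω` real
on the unit circle (where defined), then `deg s ≤ deg q ≤ 2 deg s`. -/
theorem degree_constraints_of_symmetric (s q : Polynomial ℂ)
    (hcop : IsCoprime s q) (hq : q ≠ 0)
    (hqroots : ∀ z : ℂ, q.IsRoot z → ‖z‖ = 1)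
    (hreal : ∀ z : ℂ, ‖z‖ = 1 → q.eval z ≠ 0 →
      ∃ t : ℝ, s.eval z / q.eval z = (t : ℂ)) :
    s.natDegree ≤ q.natDegree ∧ q.natDegree ≤ 2 * s.natDegree :=
  degree_constraints_of_symmetric_general s q hcop hqroots hreal
end

section
/- Let ω = s/q be a proper rational function with s, q coprime polynomials and all roots of q on the unit circle, deg(s) = n ≤ m = deg(q). For λ in the open unit disc, let k_λ(z) = (1 − conj(λ)z)^{−1} be the Szegő kernel in H². If g ∈ H² and r is a polynomial of degree < m satisfy s·k_λ = q·g + r (as functions on the disc), then g = c·k_λ where c = conj(λ^{m−n} s^♯(λ) / q^♯(λ)). -/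
/-!
With `μ = conj λ`, the constant `c = conj (λ^(m-n) s^♯(λ) / q^♯(λ))` is exactly the one for which
the degree-`m` reflection of `s - c q` vanishes at `μ`, so `s - c q = (1 - μ z) t` with
`deg t < m`. Then `f = g - c k_λ` is again in `H²` and `q f = t - r` on the disc. If `q` did not
divide `t - r`, a root `α` of `q` left over after cancelling the common factor would force
`‖f z‖ ≳ 1 / ‖z - α‖` near `α`, and the `L²` mean of `f` over the circle of radius `1 - a`
would be at least of order `1 / a`, contradicting `f ∈ H²`. Hence `q ∣ t - r`, so `t = r` by
degrees and `f = 0`.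
-/

open Polynomial Metric

namespace Polynomial

variable {K : Type*} [Field K]

theorem exists_eq_one_sub_C_mul_X_mul_of_isRoot_reflect {P : K[X]} {m : ℕ} {μ : K}
    (hP : P.natDegree ≤ m) (hμ : (P.reflect m).IsRoot μ) :
    ∃ t : K[X], t.degree < m ∧ P = (1 - C μ * X) * t := by
  obtain ⟨t, ht⟩ := dvd_iff_isRoot.mpr hμ
  have hR : (P.reflect m).natDegree ≤ m := natDegree_reflect_le.trans (max_le le_rfl hP)
  rcases eq_or_ne t 0 with rfl | ht0
  · exact ⟨0, by simp, by simpa using ht⟩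
  rw [ht, natDegree_mul (X_sub_C_ne_zero μ) ht0, natDegree_X_sub_C] at hR
  cases m with
  | zero => omega
  | succ k =>
    refine ⟨t.reflect k, ?_, ?_⟩
    · have hk : (t.reflect k).natDegree ≤ k := natDegree_reflect_le.trans (max_le le_rfl (by omega))
      exact (degree_le_of_natDegree_le hk).trans_lt (by exact_mod_cast k.lt_succ_self)
    · calc P = (P.reflect (k + 1)).reflect (1 + k) := by rw [add_comm 1 k, reflect_reflect]
        _ = (1 - C μ * X) * t.reflect k := by
          rw [ht, reflect_mul _ _ (natDegree_X_sub_C_le μ) (by omega), reflect_sub, reflect_one_X,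
            reflect_C, pow_one]

theorem eval_reflect_eq_pow_mul_eval_reverse (p : K[X]) {m : ℕ} (hm : p.natDegree ≤ m) (μ : K) :
    (p.reflect m).eval μ = μ ^ (m - p.natDegree) * p.reverse.eval μ := by
  have := reflect_mul p 1 (le_refl p.natDegree)
    (natDegree_one.trans_le (Nat.zero_le (m - p.natDegree)))
  rw [mul_one, Nat.add_sub_cancel' hm, reflect_one] at this
  rw [this, eval_mul, eval_X_pow, reverse, mul_comm]

theorem eval_reverse_ne_zero {q : K[X]} (hq : q ≠ 0) {μ : K}
    (hroot : ∀ z : K, q.IsRoot z → z * μ ≠ 1) : q.reverse.eval μ ≠ 0 := by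
  rcases eq_or_ne μ 0 with rfl | hμ
  · rwa [← coeff_zero_eq_eval_zero, coeff_zero_reverse, leadingCoeff_ne_zero]
  · have : Invertible μ⁻¹ := invertibleOfNonzero (inv_ne_zero hμ)
    have h := eval₂_reverse_eq_zero_iff (RingHom.id K) μ⁻¹ q
    rw [invOf_eq_inv, inv_inv] at h
    exact fun h0 => hroot μ⁻¹ (h.mp h0) (inv_mul_cancel₀ hμ)

end Polynomial

open Real Filter Topology

theorem eval_sharp (p : ℂ[X]) (w : ℂ) :
    (sharp p).eval w = starRingEnd ℂ (p.reverse.eval (starRingEnd ℂ w)) := by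
  rw [sharp, reverse, reflect_map, natDegree_map, eval_map, ← reverse]
  conv_lhs => rw [← Complex.conj_conj w, eval₂_at_apply]

theorem mem_hardySpace_two_iff {f : ℂ → ℂ} :
    f ∈ HardySpace 2 ↔ DifferentiableOn ℂ f (ball 0 1) ∧
      ∃ C : ℝ, ∀ r : ℝ, 0 ≤ r → r < 1 → ∫ θ in (0 : ℝ)..2 * π, ‖f (circleMap 0 r θ)‖ ^ 2 ≤ C := by
  simp only [HardySpace, Set.mem_ofPred_eq, circleMap_zero, Real.rpow_two]

theorem ContinuousOn.continuous_comp_circleMap {f : ℂ → ℂ} (hf : ContinuousOn f (ball 0 1))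
    {r : ℝ} (hr0 : 0 ≤ r) (hr1 : r < 1) : Continuous fun θ => f (circleMap 0 r θ) :=
  hf.comp_continuous (continuous_circleMap 0 r) fun θ => by
    simpa [abs_of_nonneg hr0] using hr1

theorem sub_mem_hardySpace_two {g h : ℂ → ℂ} (hg : g ∈ HardySpace 2)
    (hh : DifferentiableOn ℂ h (ball 0 1)) {M : ℝ} (hM : ∀ z ∈ ball (0 : ℂ) 1, ‖h z‖ ≤ M) :
    g - h ∈ HardySpace 2 := by
  obtain ⟨hgd, C, hC⟩ := mem_hardySpace_two_iff.mp hg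
  refine mem_hardySpace_two_iff.mpr ⟨hgd.sub hh, 2 * C + 2 * M ^ 2 * (2 * π), fun r hr0 hr1 => ?_⟩
  have hcg : Continuous fun θ => ‖g (circleMap 0 r θ)‖ ^ 2 :=
    (hgd.continuousOn.continuous_comp_circleMap hr0 hr1).norm.pow 2
  have hcf : Continuous fun θ => ‖(g - h) (circleMap 0 r θ)‖ ^ 2 :=
    ((hgd.sub hh).continuousOn.continuous_comp_circleMap hr0 hr1).norm.pow 2
  have hpt (θ : ℝ) :
      ‖(g - h) (circleMap 0 r θ)‖ ^ 2 ≤ 2 * ‖g (circleMap 0 r θ)‖ ^ 2 + 2 * M ^ 2 := by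
    have hz : circleMap 0 r θ ∈ ball (0 : ℂ) 1 := by simpa [abs_of_nonneg hr0] using hr1
    have hM' := hM _ hz
    have := norm_sub_le (g (circleMap 0 r θ)) (h (circleMap 0 r θ))
    rw [Pi.sub_apply]
    nlinarith [pow_le_pow_left₀ (norm_nonneg _) this 2, pow_le_pow_left₀ (norm_nonneg _) hM' 2,
      sq_nonneg (‖g (circleMap 0 r θ)‖ - ‖h (circleMap 0 r θ)‖)]
  calc ∫ θ in (0 : ℝ)..2 * π, ‖(g - h) (circleMap 0 r θ)‖ ^ 2
      ≤ ∫ θ in (0 : ℝ)..2 * π, (2 * ‖g (circleMap 0 r θ)‖ ^ 2 + 2 * M ^ 2) :=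
        intervalIntegral.integral_mono (by positivity) (hcf.intervalIntegrable _ _)
          (((hcg.const_mul 2).add continuous_const).intervalIntegrable _ _) hpt
    _ = 2 * (∫ θ in (0 : ℝ)..2 * π, ‖g (circleMap 0 r θ)‖ ^ 2) + 2 * M ^ 2 * (2 * π) := by
        rw [intervalIntegral.integral_add ((hcg.const_mul 2).intervalIntegrable _ _)
          intervalIntegrable_const, intervalIntegral.integral_const_mul,
          intervalIntegral.integral_const, smul_eq_mul]
        ring
    _ ≤ 2 * C + 2 * M ^ 2 * (2 * π) := by linarith [hC r hr0 hr1]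

theorem one_sub_norm_le_norm_one_sub_mul {μ z : ℂ} (hz : ‖z‖ ≤ 1) : 1 - ‖μ‖ ≤ ‖1 - μ * z‖ := by
  calc 1 - ‖μ‖ ≤ ‖(1 : ℂ)‖ - ‖μ * z‖ := by
        rw [norm_one, norm_mul]; nlinarith [norm_nonneg μ]
    _ ≤ ‖1 - μ * z‖ := norm_sub_norm_le _ _

theorem one_sub_mul_ne_zero {μ z : ℂ} (hμ : ‖μ‖ < 1) (hz : ‖z‖ ≤ 1) : 1 - μ * z ≠ 0 :=
  norm_pos_iff.mp ((sub_pos.mpr hμ).trans_le (one_sub_norm_le_norm_one_sub_mul hz))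

theorem sub_const_mul_inv_one_sub_mul_mem_hardySpace_two {g : ℂ → ℂ} (hg : g ∈ HardySpace 2)
    {μ : ℂ} (hμ : ‖μ‖ < 1) (c : ℂ) : (g - fun z => c * (1 - μ * z)⁻¹) ∈ HardySpace 2 := by
  have hne (z : ℂ) (hz : z ∈ ball (0 : ℂ) 1) : 1 - μ * z ≠ 0 :=
    one_sub_mul_ne_zero hμ (mem_ball_zero_iff.mp hz).le
  refine sub_mem_hardySpace_two hg ((DifferentiableOn.inv (by fun_prop) hne).const_mul c)
    (M := ‖c‖ * (1 - ‖μ‖)⁻¹) fun z hz => ?_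
  rw [norm_mul, norm_inv]
  gcongr
  exact one_sub_norm_le_norm_one_sub_mul (mem_ball_zero_iff.mp hz).le

theorem norm_circleMap_one_sub_sub_le {α : ℂ} (hα : ‖α‖ = 1) {a θ : ℝ} (ha : 0 ≤ a)
    (hθ : |θ - Complex.arg α| ≤ a) : ‖circleMap 0 (1 - a) θ - α‖ ≤ 2 * a := by
  have hα' : circleMap 0 1 (Complex.arg α) = α := by
    simpa [circleMap_zero, hα] using Complex.norm_mul_exp_arg_mul_I α
  have hrad : circleMap 0 (1 - a) θ - circleMap 0 1 θ = circleMap 0 (-a) θ := by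
    simp only [circleMap_zero]; push_cast; ring
  have hang : dist (circleMap 0 1 θ) α ≤ a := by
    have := (lipschitzWith_circleMap 0 1).dist_le_mul θ (Complex.arg α)
    rw [hα'] at this
    simpa [Real.dist_eq] using this.trans (by simpa [Real.dist_eq] using hθ)
  calc ‖circleMap 0 (1 - a) θ - α‖
      ≤ ‖circleMap 0 (1 - a) θ - circleMap 0 1 θ‖ + ‖circleMap 0 1 θ - α‖ :=
        norm_sub_le_norm_sub_add_norm_sub _ _ _
    _ ≤ a + a := by
        rw [hrad, norm_circleMap_zero, abs_neg, abs_of_nonneg ha, ← dist_eq_norm]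
        linarith
    _ = 2 * a := by ring

theorem Function.Periodic.intervalIntegral_le_of_nonneg {F : ℝ → ℝ} {T : ℝ}
    (hper : Function.Periodic F T) (hF : Continuous F) (hnn : 0 ≤ F) {t u : ℝ}
    (htu : t ≤ u) (hut : u ≤ t + T) : ∫ θ in t..u, F θ ≤ ∫ θ in (0 : ℝ)..T, F θ := by
  rw [← zero_add T, ← hper.intervalIntegral_add_eq t 0]
  exact intervalIntegral.integral_mono_interval le_rfl htu hut
    (Eventually.of_forall hnn) (hF.intervalIntegrable _ _)

theorem exists_pos_le_norm_sub_mul_of_eval_mul_eq {u v : ℂ[X]} {α : ℂ} (hv : v.IsRoot α)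
    (hu : u.eval α ≠ 0) {f : ℂ → ℂ} {S : Set ℂ} (h : ∀ z ∈ S, v.eval z * f z = u.eval z) :
    ∃ K > 0, ∀ᶠ z in 𝓝 α, z ∈ S → K ≤ ‖z - α‖ * ‖f z‖ := by
  obtain ⟨w, rfl⟩ := dvd_iff_isRoot.mpr hv
  have hu0 : 0 < ‖u.eval α‖ := norm_pos_iff.mpr hu
  have hu_near : ∀ᶠ z in 𝓝 α, ‖u.eval α‖ / 2 < ‖u.eval z‖ :=
    continuousAt_const.eventually_lt u.continuous.norm.continuousAt (half_lt_self hu0)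
  have hw_near : ∀ᶠ z in 𝓝 α, ‖w.eval z‖ < ‖w.eval α‖ + 1 :=
    w.continuous.norm.continuousAt.eventually_lt continuousAt_const (lt_add_one _)
  refine ⟨‖u.eval α‖ / 2 / (‖w.eval α‖ + 1), by positivity, ?_⟩
  filter_upwards [hu_near, hw_near] with z hzu hzw hzS
  rw [div_le_iff₀ (by positivity)]
  calc ‖u.eval α‖ / 2 ≤ ‖u.eval z‖ := hzu.le
    _ = ‖z - α‖ * ‖w.eval z‖ * ‖f z‖ := by
        rw [← h z hzS, eval_mul, eval_sub, eval_X, eval_C, norm_mul, norm_mul]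
    _ ≤ ‖z - α‖ * ‖f z‖ * (‖w.eval α‖ + 1) := by
        rw [mul_right_comm]
        exact mul_le_mul_of_nonneg_left hzw.le (by positivity)

theorem div_le_integral_norm_sq_circleMap_one_sub {f : ℂ → ℂ} (hf : ContinuousOn f (ball 0 1))
    {α : ℂ} (hα : ‖α‖ = 1) {K ρ : ℝ} (hK : 0 ≤ K)
    (hball : ∀ ⦃z : ℂ⦄, dist z α < ρ → ‖z‖ < 1 → K ≤ ‖z - α‖ * ‖f z‖)
    {a : ℝ} (ha0 : 0 < a) (ha1 : a ≤ 1) (haρ : 2 * a < ρ) :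
    K ^ 2 / (2 * a) ≤ ∫ θ in (0 : ℝ)..2 * π, ‖f (circleMap 0 (1 - a) θ)‖ ^ 2 := by
  set F : ℝ → ℝ := fun θ => ‖f (circleMap 0 (1 - a) θ)‖ ^ 2
  have hF : Continuous F :=
    (hf.continuous_comp_circleMap (by linarith) (by linarith)).norm.pow 2
  have hper : Function.Periodic F (2 * π) := fun θ => by
    simp only [F, periodic_circleMap 0 (1 - a) θ]
  have hlow : ∀ θ ∈ Set.Icc (Complex.arg α - a) (Complex.arg α + a), (K / (2 * a)) ^ 2 ≤ F θ := by
    intro θ hθ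
    have hdist := norm_circleMap_one_sub_sub_le hα (θ := θ) ha0.le (abs_sub_le_iff.mpr
      ⟨by linarith [hθ.2], by linarith [hθ.1]⟩)
    have hnorm : ‖circleMap 0 (1 - a) θ‖ < 1 := by
      rw [norm_circleMap_zero, abs_of_nonneg (by linarith)]; linarith
    have hK' := hball (by rw [dist_eq_norm]; linarith) hnorm
    have : K / (2 * a) ≤ ‖f (circleMap 0 (1 - a) θ)‖ := by
      rw [div_le_iff₀ (by positivity), mul_comm]
      exact hK'.trans (mul_le_mul_of_nonneg_right hdist (norm_nonneg _))
    exact pow_le_pow_left₀ (by positivity) this 2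
  calc K ^ 2 / (2 * a)
      = ∫ _ in (Complex.arg α - a)..(Complex.arg α + a), (K / (2 * a)) ^ 2 := by
        rw [intervalIntegral.integral_const, smul_eq_mul]
        field_simp
        ring
    _ ≤ ∫ θ in (Complex.arg α - a)..(Complex.arg α + a), F θ :=
        intervalIntegral.integral_mono_on (by linarith) intervalIntegrable_const
          (hF.intervalIntegrable _ _) hlow
    _ ≤ ∫ θ in (0 : ℝ)..2 * π, F θ :=
        hper.intervalIntegral_le_of_nonneg hF (fun θ => by positivity) (by linarith)
          (by linarith [pi_gt_three])

theorem notMem_hardySpace_two_of_le_norm_sub_mul {f : ℂ → ℂ} {α : ℂ} (hα : ‖α‖ = 1)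
    {K : ℝ} (hK : 0 < K) (hf : ∀ᶠ z in 𝓝 α, ‖z‖ < 1 → K ≤ ‖z - α‖ * ‖f z‖) :
    f ∉ HardySpace 2 := by
  intro hmem
  obtain ⟨hd, D, hD⟩ := mem_hardySpace_two_iff.mp hmem
  obtain ⟨ρ, hρ, hball⟩ := Metric.eventually_nhds_iff.mp hf
  have hsmall : ∀ᶠ a in 𝓝[>] (0 : ℝ), a ≤ 1 ∧ 2 * a < ρ ∧ D < K ^ 2 / 2 * a⁻¹ := by
    refine ((eventually_le_nhds one_pos).and (eventually_lt_nhds (half_pos hρ))).filter_mono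
      nhdsWithin_le_nhds |>.and ?_ |>.mono fun a ⟨⟨h1, h2⟩, h3⟩ => ⟨h1, by linarith, h3⟩
    exact ((tendsto_inv_nhdsGT_zero.const_mul_atTop (by positivity)).eventually_gt_atTop D)
  obtain ⟨a, ⟨ha1, haρ, hD'⟩, ha0⟩ := (hsmall.and self_mem_nhdsWithin).exists
  have hmean := div_le_integral_norm_sq_circleMap_one_sub hd.continuousOn hα hK.le hball ha0 ha1 haρ
  rw [div_mul_eq_div_div_swap, div_eq_mul_inv _ a] at hmean
  linarith [hD (1 - a) (by linarith) (by linarith)]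

theorem dvd_of_eval_mul_eq_of_mem_hardySpace_two {p q : ℂ[X]} (hq : q ≠ 0)
    (hroots : ∀ z : ℂ, q.IsRoot z → ‖z‖ = 1) {f : ℂ → ℂ} (hf : f ∈ HardySpace 2)
    (h : ∀ z : ℂ, ‖z‖ < 1 → q.eval z * f z = p.eval z) : q ∣ p := by
  by_contra hpq
  set d := gcd p q
  have hd0 : d ≠ 0 := gcd_ne_zero_of_right hq
  have hpd : p = d * (p / d) := (EuclideanDomain.mul_div_cancel' hd0 (gcd_dvd_left p q)).symm
  have hqd : q = d * (q / d) := (EuclideanDomain.mul_div_cancel' hd0 (gcd_dvd_right p q)).symm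
  have hq₁ : ¬IsUnit (q / d) := fun hu =>
    hpq (hqd ▸ (hu.mul_right_dvd.mpr (gcd_dvd_left p q)))
  obtain ⟨α, hα⟩ := Complex.exists_root
    (degree_pos_of_ne_zero_of_nonunit (right_ne_zero_of_mul (hqd ▸ hq)) hq₁)
  have hα1 : ‖α‖ = 1 := hroots α (by rw [hqd, IsRoot, eval_mul, hα.eq_zero, mul_zero])
  have hp₁α : (p / d).eval α ≠ 0 :=
    ((aeval_ne_zero_of_isCoprime (isCoprime_div_gcd_div_gcd hq) α).resolve_right
      (by simpa using hα.eq_zero))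
  have h₁ (z : ℂ) (hz : ‖z‖ < 1) : (q / d).eval z * f z = (p / d).eval z := by
    have hdz : d.eval z ≠ 0 := fun h0 =>
      hz.ne (hroots z (by rw [hqd, IsRoot, eval_mul, h0, zero_mul]))
    apply mul_left_cancel₀ hdz
    rw [← mul_assoc, ← eval_mul, ← eval_mul, ← hqd, ← hpd, h z hz]
  obtain ⟨K, hK, hKf⟩ := exists_pos_le_norm_sub_mul_of_eval_mul_eq hα hp₁α (S := {z | ‖z‖ < 1}) h₁
  exact notMem_hardySpace_two_of_le_norm_sub_mul hα1 hK hKf hf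

theorem szego_kernel_eigenvector_general (s q : Polynomial ℂ)
    (hq : q ≠ 0)
    (hqroots : ∀ z : ℂ, q.IsRoot z → ‖z‖ = 1)
    (hprop : s.natDegree ≤ q.natDegree)
    (lam : ℂ) (hlam : ‖lam‖ < 1)
    (g : ℂ → ℂ) (hg : g ∈ HardySpace 2)
    (r : Polynomial ℂ) (hr : r.degree < (q.natDegree : WithBot ℕ))
    (heq : ∀ z : ℂ, ‖z‖ < 1 →
      s.eval z * (1 - (starRingEnd ℂ) lam * z)⁻¹ = q.eval z * g z + r.eval z) :
    ∀ z : ℂ, ‖z‖ < 1 →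
      g z = (starRingEnd ℂ)
          (lam ^ (q.natDegree - s.natDegree) * (sharp s).eval lam / (sharp q).eval lam) *
        (1 - (starRingEnd ℂ) lam * z)⁻¹ := by
  set μ := starRingEnd ℂ lam
  have hμ : ‖μ‖ < 1 := by rwa [Complex.norm_conj]
  have hqμ : q.reverse.eval μ ≠ 0 := eval_reverse_ne_zero hq fun z hz hzμ =>
    hμ.ne (by simpa [hqroots z hz] using congrArg norm hzμ)
  set c := (s.reflect q.natDegree).eval μ / q.reverse.eval μ
  have hc : starRingEnd ℂ
      (lam ^ (q.natDegree - s.natDegree) * (sharp s).eval lam / (sharp q).eval lam) = c := by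
    simp only [c, μ, map_div₀, map_mul, map_pow, eval_sharp, Complex.conj_conj,
      eval_reflect_eq_pow_mul_eval_reverse s hprop]
  obtain ⟨t, ht, hst⟩ := exists_eq_one_sub_C_mul_X_mul_of_isRoot_reflect (P := s - C c * q)
    (m := q.natDegree) (μ := μ)
    ((natDegree_sub_le_of_le hprop (natDegree_C_mul_le c q)).trans_eq (max_self _))
    (by rw [IsRoot, reflect_sub, reflect_C_mul, eval_sub, eval_mul, eval_C, ← reverse,
      div_mul_cancel₀ _ hqμ, sub_self])
  have hqf (z : ℂ) (hz : ‖z‖ < 1) :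
      q.eval z * (g - fun z => c * (1 - μ * z)⁻¹) z = (t - r).eval z := by
    have hk : (1 - μ * z) * (1 - μ * z)⁻¹ = 1 := mul_inv_cancel₀ (one_sub_mul_ne_zero hμ hz.le)
    have hstz := congrArg (eval z) hst
    simp only [eval_sub, eval_mul, eval_C, eval_one, eval_X] at hstz
    simp only [Pi.sub_apply, eval_sub]
    linear_combination -heq z hz + (1 - μ * z)⁻¹ * hstz + t.eval z * hk
  have htr : t - r = 0 := eq_zero_of_dvd_of_degree_lt
    (dvd_of_eval_mul_eq_of_mem_hardySpace_two hq hqroots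
      (sub_const_mul_inv_one_sub_mul_mem_hardySpace_two hg hμ c) hqf)
    ((degree_sub_le t r).trans_lt (max_lt ht hr) |>.trans_eq (degree_eq_natDegree hq).symm)
  intro z hz
  have hqz : q.eval z ≠ 0 := fun h0 => hz.ne (hqroots z h0)
  have hfz := (mul_eq_zero.mp ((hqf z hz).trans (by rw [htr, eval_zero]))).resolve_left hqz
  rw [hc]
  exact sub_eq_zero.mp hfz

/-- The Szegő kernel `k_λ` is an eigenvector of the Toeplitz-like operator `T_ω`:
if `s·k_λ = q·g + r` on the disc with `g ∈ H²` and `deg r < m`, then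
`g = conj(λ^(m−n) s^♯(λ)/q^♯(λ)) · k_λ`. -/
theorem szego_kernel_eigenvector (s q : Polynomial ℂ)
    (hcop : IsCoprime s q) (hq : q ≠ 0)
    (hqroots : ∀ z : ℂ, q.IsRoot z → ‖z‖ = 1)
    (hprop : s.natDegree ≤ q.natDegree)
    (lam : ℂ) (hlam : ‖lam‖ < 1)
    (g : ℂ → ℂ) (hg : g ∈ HardySpace 2)
    (r : Polynomial ℂ) (hr : r.degree < (q.natDegree : WithBot ℕ))
    (heq : ∀ z : ℂ, ‖z‖ < 1 →
      s.eval z * (1 - (starRingEnd ℂ) lam * z)⁻¹ = q.eval z * g z + r.eval z) :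
    ∀ z : ℂ, ‖z‖ < 1 →
      g z = (starRingEnd ℂ)
          (lam ^ (q.natDegree - s.natDegree) * (sharp s).eval lam / (sharp q).eval lam) *
        (1 - (starRingEnd ℂ) lam * z)⁻¹ :=
  szego_kernel_eigenvector_general s q hq hqroots hprop lam hlam g hg r hr heq
end

section
/- Let ω̃ = s̃/q̃ with s̃, q̃ coprime polynomials and all roots of q̃ on the unit circle. Then { f ∈ H² : ω̃·f ∈ H² } = q̃·H². (Here ω̃·f is the function z ↦ s̃(z)f(z)/q̃(z) on the open unit disc.) -/
/-!
Since `q̃` has no zeros in the open disc, `ω̃ f = s̃ h` whenever `f = q̃ h`, and `H²` is stable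
under multiplication by polynomials, which are bounded on the disc. Conversely, a Bézout
identity `a s̃ + b q̃ = 1` exhibits `h = a (ω̃ f) + b f ∈ H²` with `q̃ h = f`.
-/

open Polynomial Metric

lemma Real.add_rpow_le_two_rpow_mul_rpow_add_rpow {p a b : ℝ} (ha : 0 ≤ a) (hb : 0 ≤ b)
    (hp : 0 ≤ p) : (a + b) ^ p ≤ 2 ^ p * (a ^ p + b ^ p) := by
  have hap := Real.rpow_nonneg ha p
  have hbp := Real.rpow_nonneg hb p
  rcases le_total a b with hab | hba
  · calc (a + b) ^ p ≤ (2 * b) ^ p := by gcongr; linarith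
      _ = 2 ^ p * b ^ p := Real.mul_rpow zero_le_two hb
      _ ≤ 2 ^ p * (a ^ p + b ^ p) := by gcongr; linarith
  · calc (a + b) ^ p ≤ (2 * a) ^ p := by gcongr; linarith
      _ = 2 ^ p * a ^ p := Real.mul_rpow zero_le_two ha
      _ ≤ 2 ^ p * (a ^ p + b ^ p) := by gcongr; linarith

lemma intervalIntegrable_norm_rpow_circle {f : ℂ → ℂ} (hf : DifferentiableOn ℂ f (ball 0 1))
    {p : ℝ} (hp : 0 ≤ p) {r : ℝ} (hr₀ : 0 ≤ r) (hr₁ : r < 1) (a b : ℝ) :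
    IntervalIntegrable (fun θ : ℝ => ‖f ((r : ℂ) * Complex.exp (θ * Complex.I))‖ ^ p)
      MeasureTheory.volume a b := by
  have hcont : Continuous fun θ : ℝ => f ((r : ℂ) * Complex.exp (θ * Complex.I)) :=
    hf.continuousOn.comp_continuous (by fun_prop) (ofReal_mul_exp_mem_ball_one hr₀ hr₁)
  exact ((Real.continuous_rpow_const hp).comp hcont.norm).intervalIntegrable a b

namespace HardySpace

variable {p : ℝ}

theorem of_norm_rpow_le (hp : 0 ≤ p) {f₁ f₂ g : ℂ → ℂ} (h₁ : f₁ ∈ HardySpace p)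
    (h₂ : f₂ ∈ HardySpace p) (hg : DifferentiableOn ℂ g (ball 0 1)) {c : ℝ} (hc : 0 ≤ c)
    (hle : ∀ z ∈ ball (0 : ℂ) 1, ‖g z‖ ^ p ≤ c * (‖f₁ z‖ ^ p + ‖f₂ z‖ ^ p)) :
    g ∈ HardySpace p := by
  obtain ⟨hf₁, C₁, hC₁⟩ := h₁
  obtain ⟨hf₂, C₂, hC₂⟩ := h₂
  refine ⟨hg, c * (C₁ + C₂), fun r hr₀ hr₁ => ?_⟩
  have i₁ := intervalIntegrable_norm_rpow_circle hf₁ hp hr₀ hr₁ 0 (2 * Real.pi)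
  have i₂ := intervalIntegrable_norm_rpow_circle hf₂ hp hr₀ hr₁ 0 (2 * Real.pi)
  calc _ ≤ ∫ θ in (0:ℝ)..(2 * Real.pi),
          c * (‖f₁ ((r : ℂ) * Complex.exp (θ * Complex.I))‖ ^ p +
            ‖f₂ ((r : ℂ) * Complex.exp (θ * Complex.I))‖ ^ p) :=
        intervalIntegral.integral_mono_on Real.two_pi_pos.le
          (intervalIntegrable_norm_rpow_circle hg hp hr₀ hr₁ _ _) ((i₁.add i₂).const_mul c)
          fun θ _ => hle _ (ofReal_mul_exp_mem_ball_one hr₀ hr₁ θ)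
    _ = c * ((∫ θ in (0:ℝ)..(2 * Real.pi), ‖f₁ ((r : ℂ) * Complex.exp (θ * Complex.I))‖ ^ p) +
          ∫ θ in (0:ℝ)..(2 * Real.pi), ‖f₂ ((r : ℂ) * Complex.exp (θ * Complex.I))‖ ^ p) := by
      rw [intervalIntegral.integral_const_mul, intervalIntegral.integral_add i₁ i₂]
    _ ≤ c * (C₁ + C₂) :=
      mul_le_mul_of_nonneg_left (add_le_add (hC₁ r hr₀ hr₁) (hC₂ r hr₀ hr₁)) hc

theorem congr (hp : 0 ≤ p) {f g : ℂ → ℂ} (hf : f ∈ HardySpace p)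
    (hfg : Set.EqOn g f (ball 0 1)) : g ∈ HardySpace p := by
  refine of_norm_rpow_le hp hf hf (hf.1.congr hfg) zero_le_one fun z hz => ?_
  have := Real.rpow_nonneg (norm_nonneg (f z)) p
  rw [hfg hz]
  linarith

theorem add (hp : 0 ≤ p) {f g : ℂ → ℂ} (hf : f ∈ HardySpace p) (hg : g ∈ HardySpace p) :
    (fun z => f z + g z) ∈ HardySpace p :=
  of_norm_rpow_le hp hf hg (hf.1.add hg.1) (by positivity) fun z _ =>
    (Real.rpow_le_rpow (norm_nonneg _) (norm_add_le _ _) hp).trans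
      (Real.add_rpow_le_two_rpow_mul_rpow_add_rpow (norm_nonneg _) (norm_nonneg _) hp)

theorem mul_of_bounded (hp : 0 ≤ p) {f g : ℂ → ℂ} (hf : f ∈ HardySpace p)
    (hg : DifferentiableOn ℂ g (ball 0 1)) {M : ℝ} (hM : ∀ z ∈ ball (0 : ℂ) 1, ‖g z‖ ≤ M) :
    (fun z => g z * f z) ∈ HardySpace p := by
  have hM₀ : 0 ≤ M := (norm_nonneg _).trans (hM 0 (mem_ball_self one_pos))
  refine of_norm_rpow_le hp hf hf (hg.mul hf.1) (Real.rpow_nonneg hM₀ p) fun z hz => ?_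
  have := Real.rpow_nonneg (norm_nonneg (f z)) p
  calc ‖g z * f z‖ ^ p = ‖g z‖ ^ p * ‖f z‖ ^ p :=
        by rw [norm_mul, Real.mul_rpow (norm_nonneg _) (norm_nonneg _)]
    _ ≤ M ^ p * ‖f z‖ ^ p := by gcongr; exact hM z hz
    _ ≤ M ^ p * (‖f z‖ ^ p + ‖f z‖ ^ p) := by gcongr; linarith

theorem polynomial_eval_mul (hp : 0 ≤ p) (P : ℂ[X]) {f : ℂ → ℂ} (hf : f ∈ HardySpace p) :
    (fun z => P.eval z * f z) ∈ HardySpace p := by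
  obtain ⟨M, hM⟩ := (isCompact_closedBall (0 : ℂ) 1).exists_bound_of_continuousOn
    P.continuous.continuousOn
  exact mul_of_bounded hp hf P.differentiable.differentiableOn
    fun z hz => hM z (ball_subset_closedBall hz)

end HardySpace

theorem domain_sarason_toeplitz_general (st qt : Polynomial ℂ)
    (hcop : IsCoprime st qt)
    (hroots : ∀ z : ℂ, qt.IsRoot z → ‖z‖ = 1) :
    {f : ℂ → ℂ | f ∈ HardySpace 2 ∧
        (fun z => st.eval z * f z / qt.eval z) ∈ HardySpace 2} =
    {g : ℂ → ℂ | ∃ h ∈ HardySpace 2,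
        ∀ z : ℂ, ‖z‖ < 1 → g z = qt.eval z * h z} := by
  have hq : ∀ z : ℂ, ‖z‖ < 1 → qt.eval z ≠ 0 := fun z hz hroot =>
    hz.ne (hroots z hroot)
  ext f
  constructor
  · rintro ⟨hf, hωf⟩
    obtain ⟨a, b, hab⟩ := hcop
    refine ⟨fun z => a.eval z * (st.eval z * f z / qt.eval z) + b.eval z * f z,
      HardySpace.add zero_le_two (HardySpace.polynomial_eval_mul zero_le_two a hωf)
        (HardySpace.polynomial_eval_mul zero_le_two b hf), fun z hz => ?_⟩
    have hbezout : a.eval z * st.eval z + b.eval z * qt.eval z = 1 := by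
      simpa using congrArg (eval z) hab
    have := hq z hz
    field_simp
    linear_combination (-f z) * hbezout
  · rintro ⟨h, hh, hfh⟩
    have hfh' : Set.EqOn f (fun z => qt.eval z * h z) (ball 0 1) := fun z hz =>
      hfh z (mem_ball_zero_iff.mp hz)
    refine ⟨HardySpace.congr zero_le_two (HardySpace.polynomial_eval_mul zero_le_two qt hh) hfh',
      HardySpace.congr zero_le_two (HardySpace.polynomial_eval_mul zero_le_two st hh)
        fun z hz => ?_⟩
    have := hq z (mem_ball_zero_iff.mp hz)
    simp only [hfh' hz]
    field_simp

/-- For `ω̃ = s̃/q̃` with `s̃, q̃` coprime and all roots of `q̃` on the unit circle,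
`{f ∈ H² : ω̃ f ∈ H²} = q̃ H²` (as functions on the open unit disc). -/
theorem domain_sarason_toeplitz (st qt : Polynomial ℂ)
    (hcop : IsCoprime st qt) (hqt : qt ≠ 0)
    (hroots : ∀ z : ℂ, qt.IsRoot z → ‖z‖ = 1) :
    {f : ℂ → ℂ | f ∈ HardySpace 2 ∧
        (fun z => st.eval z * f z / qt.eval z) ∈ HardySpace 2} =
    {g : ℂ → ℂ | ∃ h ∈ HardySpace 2,
        ∀ z : ℂ, ‖z‖ < 1 → g z = qt.eval z * h z} :=
  domain_sarason_toeplitz_general st qt hcop hroots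
end

section
/- Let ω = s/q with s, q coprime polynomials of degrees n and m respectively, all roots of q on the unit circle, and let f be analytic on an open neighborhood of the closed unit disc. Then there exist h ∈ H² (in fact, h analytic on a neighborhood of the closed disc) and a polynomial r with deg(r) < m such that s·f = q·h + r. -/
open Polynomial Metric

open Topology

/-!
Dividing a holomorphic function by a polynomial `q` leaves a holomorphic quotient as long as every
root of `q` is an interior point of the domain: peeling off one linear factor `X - a` at a time,
the quotient `h` is replaced by its slope function `dslope h a`, which is holomorphic by Riemann's
removable singularity theorem, and the value `h a` moves into the remainder. Applied to `s * f` on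
a neighbourhood of the closed disc, the quotient is bounded on the disc, hence lies in `H²`.
-/

theorem mem_hardySpace_of_forall_norm_le {p : ℝ} (hp : 0 ≤ p) {f : ℂ → ℂ}
    (hf : DifferentiableOn ℂ f (ball 0 1)) {C : ℝ} (hC : ∀ z ∈ ball (0 : ℂ) 1, ‖f z‖ ≤ C) :
    f ∈ HardySpace p := by
  refine ⟨hf, C ^ p * |2 * Real.pi - 0|, fun r hr0 hr1 => ?_⟩
  refine (Real.le_norm_self _).trans (intervalIntegral.norm_integral_le_of_norm_le_const
    fun θ _ => ?_)
  have hmem : (r : ℂ) * Complex.exp (θ * Complex.I) ∈ ball (0 : ℂ) 1 := by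
    rwa [mem_ball_zero_iff, norm_mul, Complex.norm_exp_ofReal_mul_I, mul_one,
      Complex.norm_real, Real.norm_of_nonneg hr0]
  rw [Real.norm_of_nonneg (by positivity)]
  exact Real.rpow_le_rpow (norm_nonneg _) (hC _ hmem) hp

theorem DifferentiableOn.exists_eq_eval_mul_add {U : Set ℂ} {g : ℂ → ℂ}
    (hg : DifferentiableOn ℂ g U) {q : ℂ[X]} (hq : q ≠ 0) (hroots : ∀ z, q.IsRoot z → U ∈ 𝓝 z) :
    ∃ h : ℂ → ℂ, DifferentiableOn ℂ h U ∧ ∃ r : ℂ[X], r.degree < q.natDegree ∧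
      ∀ z ∈ U, g z = q.eval z * h z + r.eval z := by
  induction hn : q.natDegree generalizing q with
  | zero =>
    rw [eq_C_of_natDegree_eq_zero hn] at hq ⊢
    refine ⟨fun z => g z / q.coeff 0, hg.div_const _, 0, by simp, fun z _ => ?_⟩
    have : q.coeff 0 ≠ 0 := by simpa using hq
    field_simp
    simp
  | succ n ih =>
    obtain ⟨a, ha⟩ :=
      Complex.exists_root (natDegree_pos_iff_degree_pos.mp (by omega : 0 < q.natDegree))
    obtain ⟨q₁, rfl⟩ := dvd_iff_isRoot.mpr ha
    have hq₁ : q₁ ≠ 0 := right_ne_zero_of_mul hq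
    have hq₁n : q₁.natDegree = n := by
      rw [natDegree_mul (X_sub_C_ne_zero a) hq₁, natDegree_X_sub_C] at hn
      omega
    obtain ⟨h₁, hh₁, r₁, hr₁, hgh₁⟩ :=
      ih hq₁ (fun z hz => hroots z (by simp [IsRoot, hz.eq_zero])) hq₁n
    refine ⟨dslope h₁ a, (Complex.differentiableOn_dslope (hroots a ha)).mpr hh₁,
      C (h₁ a) * q₁ + r₁, ?_, fun z hz => ?_⟩
    · refine ((degree_add_le _ _).trans (max_le ?_ hr₁.le)).trans_lt
        (WithBot.coe_lt_coe.mpr n.lt_succ_self)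
      exact degree_le_of_natDegree_le ((natDegree_C_mul_le _ _).trans hq₁n.le)
    · have hslope := sub_smul_dslope h₁ a z
      rw [smul_eq_mul] at hslope
      simp only [eval_add, eval_mul, eval_sub, eval_X, eval_C]
      linear_combination hgh₁ z hz - q₁.eval z * hslope

theorem analytic_in_domain_general (s q : Polynomial ℂ) (hq : q ≠ 0)
    (hroots : ∀ z : ℂ, q.IsRoot z → ‖z‖ = 1)
    (f : ℂ → ℂ) (U : Set ℂ) (hU : IsOpen U)
    (hUsub : closedBall (0 : ℂ) 1 ⊆ U) (hf : DifferentiableOn ℂ f U) :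
    ∃ h : ℂ → ℂ, ∃ V : Set ℂ, IsOpen V ∧ closedBall (0 : ℂ) 1 ⊆ V ∧
      DifferentiableOn ℂ h V ∧ h ∈ HardySpace 2 ∧
      ∃ r : Polynomial ℂ, r.degree < (q.natDegree : WithBot ℕ) ∧
        ∀ z : ℂ, ‖z‖ < 1 →
          s.eval z * f z = q.eval z * h z + r.eval z := by
  have hrootsU : ∀ z, q.IsRoot z → U ∈ 𝓝 z := fun z hz =>
    hU.mem_nhds (hUsub (mem_closedBall_zero_iff.mpr (hroots z hz).le))
  obtain ⟨h, hh, r, hr, hsf⟩ :=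
    (s.differentiable.differentiableOn.mul hf).exists_eq_eval_mul_add hq hrootsU
  obtain ⟨C, hC⟩ :=
    (isCompact_closedBall (0 : ℂ) 1).exists_bound_of_continuousOn (hh.continuousOn.mono hUsub)
  have hball : ball (0 : ℂ) 1 ⊆ U := ball_subset_closedBall.trans hUsub
  refine ⟨h, U, hU, hUsub, hh, ?_, r, hr, fun z hz => hsf z (hball (mem_ball_zero_iff.mpr hz))⟩
  exact mem_hardySpace_of_forall_norm_le zero_le_two (hh.mono hball)
    fun z hz => hC z (ball_subset_closedBall hz)

/-- Functions analytic on a neighborhood of the closed disc lie in `Dom(T_ω)`: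
if `f` is analytic on a neighborhood of the closed unit disc, then there are `h ∈ H²`
(analytic on a neighborhood of the closed disc) and a polynomial `r` with `deg r < deg q`
such that `s f = q h + r` on the open disc. -/
theorem analytic_in_domain (s q : Polynomial ℂ) (hcop : IsCoprime s q) (hq : q ≠ 0)
    (hroots : ∀ z : ℂ, q.IsRoot z → ‖z‖ = 1)
    (f : ℂ → ℂ) (U : Set ℂ) (hU : IsOpen U)
    (hUsub : closedBall (0 : ℂ) 1 ⊆ U) (hf : DifferentiableOn ℂ f U) :
    ∃ h : ℂ → ℂ, ∃ V : Set ℂ, IsOpen V ∧ closedBall (0 : ℂ) 1 ⊆ V ∧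
      DifferentiableOn ℂ h V ∧ h ∈ HardySpace 2 ∧
      ∃ r : Polynomial ℂ, r.degree < (q.natDegree : WithBot ℕ) ∧
        ∀ z : ℂ, ‖z‖ < 1 →
          s.eval z * f z = q.eval z * h z + r.eval z :=
  analytic_in_domain_general s q hq hroots f U hU hUsub hf
end

section
/- Let s, q be coprime polynomials with all roots of q on the unit circle, deg(q) = m, and suppose s(z)/q(z) is real for all unimodular z not a root of q, with s/q not constant. If deg(q) is odd, then (s/q)(T) = ℝ, i.e., for every t ∈ ℝ there exists z on the unit circle with q(z) ≠ 0 and s(z)/q(z) = t. -/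
open Polynomial Complex Function

/-!
If `t` were not attained, `g = s - t q` would have no zero on the circle (at the roots of `q`
by coprimality) and `q / g` would be real there. Writing
`e^{iθ} - w = 2i e^{i(θ + arg w)/2} sin ((θ - arg w)/2)` for each root `w` of `q`, the value
`q(e^{iθ}) / g(e^{iθ})` is a real multiple of `u(θ) = c (2i)^m e^{i(mθ + Σ arg w)/2} / g(e^{iθ})`.
This `u` is continuous and nowhere zero, real off the countably many zeros of the sine factors and
hence everywhere, and `u(θ + 2π) = -u(θ)` because `m` is odd; the intermediate value theorem
then produces a zero of `u`.
-/

lemma Function.Antiperiodic.exists_eq_zero {f : ℝ → ℝ} {c : ℝ} (hf : Antiperiodic f c)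
    (hcont : Continuous f) : ∃ x, f x = 0 := by
  have h0 : (0 : ℝ) ∈ Set.uIcc (f 0) (f c) := by
    rw [hf.eq, Set.mem_uIcc]
    rcases le_total 0 (f 0) with h | h
    · exact Or.inr ⟨by linarith, h⟩
    · exact Or.inl ⟨h, by linarith⟩
  obtain ⟨x, -, hx⟩ := intermediate_value_uIcc hcont.continuousOn h0
  exact ⟨x, hx⟩

lemma Function.Antiperiodic.exists_eq_zero_of_dense_im_eq_zero {u : ℝ → ℂ} {c : ℝ}
    (hu : Antiperiodic u c) (hcont : Continuous u) {D : Set ℝ} (hD : Dense D)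
    (him : ∀ x ∈ D, (u x).im = 0) : ∃ x, u x = 0 := by
  have him' : (fun x => (u x).im) = 0 :=
    Continuous.ext_on hD (continuous_im.comp hcont) continuous_const him
  have hre : Antiperiodic (fun x => (u x).re) c := fun x => by simp only [hu x, neg_re]
  obtain ⟨x, hx⟩ := hre.exists_eq_zero (continuous_re.comp hcont)
  exact ⟨x, Complex.ext hx (congrFun him' x)⟩

lemma exp_mul_I_sub_exp_mul_I (θ α : ℝ) :
    exp (θ * I) - exp (α * I)
      = 2 * I * exp (((θ + α) / 2 : ℝ) * I) * Real.sin ((θ - α) / 2) := by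
  have hθ : (θ : ℂ) * I = ((θ + α) / 2 : ℝ) * I + ((θ - α) / 2 : ℝ) * I := by push_cast; ring
  have hα : (α : ℂ) * I = ((θ + α) / 2 : ℝ) * I - ((θ - α) / 2 : ℝ) * I := by push_cast; ring
  rw [hθ, hα, exp_add, exp_sub, ofReal_sin, Complex.sin, neg_mul, exp_neg]
  field_simp
  ring_nf
  simp [I_sq]

section HalfAngle

variable (M : Multiset ℂ)

/-- For a multiset `M` of unimodular points, `∏ (e^{iθ} - w)` factors as
`halfAnglePhase M θ * sineProduct M θ` (see `prod_exp_mul_I_sub_eq`). -/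
noncomputable def halfAnglePhase (θ : ℝ) : ℂ :=
  (2 * I) ^ Multiset.card M * exp (((Multiset.card M * θ + (M.map arg).sum) / 2 : ℝ) * I)

noncomputable def sineProduct (θ : ℝ) : ℝ :=
  (M.map fun w => Real.sin ((θ - arg w) / 2)).prod

lemma prod_exp_mul_I_sub_eq {M : Multiset ℂ} (hM : ∀ w ∈ M, ‖w‖ = 1) (θ : ℝ) :
    (M.map fun w => exp (θ * I) - w).prod = halfAnglePhase M θ * sineProduct M θ := by
  induction M using Multiset.induction with
  | empty => simp [halfAnglePhase, sineProduct]
  | cons w M ih =>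
    have hw : w = exp (arg w * I) := by
      simpa [hM w (Multiset.mem_cons_self w M)] using (norm_mul_exp_arg_mul_I w).symm
    simp only [halfAnglePhase, sineProduct, Multiset.map_cons, Multiset.prod_cons,
      Multiset.sum_cons, Multiset.card_cons] at ih ⊢
    rw [ih fun x hx => hM x (Multiset.mem_cons_of_mem hx)]
    nth_rewrite 1 [hw]
    rw [exp_mul_I_sub_exp_mul_I, pow_succ]
    push_cast
    rw [show ((M.card + 1 : ℂ) * θ + (arg w + (M.map arg).sum)) / 2 * I
        = (θ + arg w) / 2 * I + (M.card * θ + (M.map arg).sum) / 2 * I by ring, exp_add]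
    ring

lemma halfAnglePhase_ne_zero (θ : ℝ) : halfAnglePhase M θ ≠ 0 := by
  unfold halfAnglePhase
  exact mul_ne_zero (pow_ne_zero _ (mul_ne_zero two_ne_zero I_ne_zero)) (exp_ne_zero _)

lemma continuous_halfAnglePhase : Continuous (halfAnglePhase M) := by
  unfold halfAnglePhase
  fun_prop

lemma antiperiodic_halfAnglePhase (hM : Odd (Multiset.card M)) :
    Antiperiodic (halfAnglePhase M) (2 * Real.pi) := by
  intro θ
  have hshift : ((Multiset.card M * (θ + 2 * Real.pi) + (M.map arg).sum) / 2 : ℝ) * I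
      = ((Multiset.card M * θ + (M.map arg).sum) / 2 : ℝ) * I
        + Multiset.card M * (Real.pi * I) := by
    push_cast; ring
  simp only [halfAnglePhase, hshift, exp_add, exp_nat_mul, exp_pi_mul_I, hM.neg_one_pow]
  ring

lemma dense_sineProduct_ne_zero : Dense {θ | sineProduct M θ ≠ 0} := by
  have hzeros : {θ | sineProduct M θ = 0} ⊆
      ⋃ w ∈ M.toFinset, Set.range fun n : ℤ => 2 * (n * Real.pi) + arg w := by
    intro θ hθ
    obtain ⟨w, hw, hsin⟩ := Multiset.mem_map.mp (Multiset.prod_eq_zero_iff.mp hθ)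
    obtain ⟨n, hn⟩ := Real.sin_eq_zero_iff.mp hsin
    exact Set.mem_biUnion (Multiset.mem_toFinset.mpr hw) ⟨n, by linarith⟩
  have hcount : {θ | sineProduct M θ = 0}.Countable :=
    (M.toFinset.countable_toSet.biUnion fun w _ => Set.countable_range _).mono hzeros
  simpa only [Set.compl_ofPred] using hcount.dense_compl ℝ

end HalfAngle

lemma eval_exp_mul_I_eq {q : ℂ[X]} (hq : ∀ w ∈ q.roots, ‖w‖ = 1) (θ : ℝ) :
    q.eval (exp (θ * I)) = q.leadingCoeff * halfAnglePhase q.roots θ * sineProduct q.roots θ := by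
  rw [(IsAlgClosed.splits q).eval_eq_prod_roots, prod_exp_mul_I_sub_eq hq, mul_assoc]

theorem exists_im_div_ne_zero_of_odd_natDegree {q g : ℂ[X]} (hq : ∀ w ∈ q.roots, ‖w‖ = 1)
    (hodd : Odd q.natDegree) (hg : ∀ z, ‖z‖ = 1 → g.eval z ≠ 0) :
    ∃ z, ‖z‖ = 1 ∧ (q.eval z / g.eval z).im ≠ 0 := by
  by_contra! hreal
  have hq0 : q ≠ 0 := by rintro rfl; simp at hodd
  have hgθ (θ : ℝ) : g.eval (exp (θ * I)) ≠ 0 := hg _ (norm_exp_ofReal_mul_I θ)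
  have hcard : Odd (Multiset.card q.roots) := IsAlgClosed.card_roots_eq_natDegree (p := q) ▸ hodd
  set u : ℝ → ℂ := fun θ => q.leadingCoeff * halfAnglePhase q.roots θ / g.eval (exp (θ * I))
  have hu : Antiperiodic u (2 * Real.pi) := fun θ => by
    have hexp : exp (↑(θ + 2 * Real.pi) * I) = exp (θ * I) := by
      push_cast; exact exp_mul_I_periodic θ
    simp only [u, hexp, antiperiodic_halfAnglePhase _ hcard θ]
    ring
  have hcont : Continuous u :=
    (continuous_const.mul (continuous_halfAnglePhase _)).div (g.continuous.comp (by fun_prop)) hgθ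
  obtain ⟨θ, hθ⟩ := hu.exists_eq_zero_of_dense_im_eq_zero hcont
    (dense_sineProduct_ne_zero q.roots) fun θ hS => by
      have him := hreal _ (norm_exp_ofReal_mul_I θ)
      rw [eval_exp_mul_I_eq hq, mul_div_right_comm, mul_im, ofReal_re, ofReal_im, mul_zero,
        zero_add, mul_eq_zero] at him
      exact him.resolve_right hS
  exact div_ne_zero (mul_ne_zero (leadingCoeff_ne_zero.2 hq0) (halfAnglePhase_ne_zero _ θ))
    (hgθ θ) hθ

theorem odd_degree_image_is_real_line_general (s q : Polynomial ℂ)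
    (hcop : IsCoprime s q)
    (hqroots : ∀ z : ℂ, q.IsRoot z → ‖z‖ = 1)
    (hreal : ∀ z : ℂ, ‖z‖ = 1 → q.eval z ≠ 0 →
      ∃ t : ℝ, s.eval z / q.eval z = (t : ℂ))
    (hodd : Odd q.natDegree) :
    ∀ t : ℝ, ∃ z : ℂ, ‖z‖ = 1 ∧ q.eval z ≠ 0 ∧
      s.eval z / q.eval z = (t : ℂ) := by
  intro t
  by_contra! hmiss
  set g := s - C (t : ℂ) * q
  have hgq : IsCoprime g q := IsCoprime.sub_mul_right_left_iff.mpr hcop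
  have hg (z : ℂ) (hz : ‖z‖ = 1) : g.eval z ≠ 0 := by
    intro hgz
    by_cases hqz : q.eval z = 0
    · simpa [coe_aeval_eq_eval, hgz, hqz] using aeval_ne_zero_of_isCoprime hgq z
    · refine hmiss z hz hqz ?_
      rw [div_eq_iff hqz]
      simpa [g, sub_eq_zero] using hgz
  obtain ⟨z, hz, him⟩ := exists_im_div_ne_zero_of_odd_natDegree
    (fun w hw => hqroots w (isRoot_of_mem_roots hw)) hodd hg
  by_cases hqz : q.eval z = 0
  · simp [hqz] at him
  obtain ⟨r, hr⟩ := hreal z hz hqz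
  have hratio : g.eval z / q.eval z = ((r - t : ℝ) : ℂ) := by
    simp [g, sub_div, hr, mul_div_cancel_right₀ _ hqz]
  exact him (by rw [← inv_div, hratio, ← ofReal_inv, ofReal_im])

/-- If `ω = s/q` is nonconstant, real on the unit circle (where defined), with `s, q`
coprime, all roots of `q` on the unit circle, and `deg q` odd, then `ω(𝕋) = ℝ`:
every real `t` is attained as `s(z)/q(z)` for some unimodular `z` with `q(z) ≠ 0`. -/
theorem odd_degree_image_is_real_line (s q : Polynomial ℂ)
    (hcop : IsCoprime s q) (hq : q ≠ 0)
    (hqroots : ∀ z : ℂ, q.IsRoot z → ‖z‖ = 1)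
    (hreal : ∀ z : ℂ, ‖z‖ = 1 → q.eval z ≠ 0 →
      ∃ t : ℝ, s.eval z / q.eval z = (t : ℂ))
    (hnc : ¬ ∃ c : ℂ, ∀ z : ℂ, ‖z‖ = 1 → q.eval z ≠ 0 →
      s.eval z / q.eval z = c)
    (hodd : Odd q.natDegree) :
    ∀ t : ℝ, ∃ z : ℂ, ‖z‖ = 1 ∧ q.eval z ≠ 0 ∧
      s.eval z / q.eval z = (t : ℂ) :=
  odd_degree_image_is_real_line_general s q hcop hqroots hreal hodd
end
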